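/- Define χ(t,x) = tan(2t)·tanh(x), and let Ω = {(t,x,v) ∈ ℝ³ : cos(2t) ≠ 0, cos v ≠ 0, tan v ≠ χ(t,x)}. Define on Ω: ξ(t,x,v) = −2(1 + χ·tan v)/(tan v − χ) and θ(t,x,v) = −(χ_t + χ_x·ξ)/(1 + χ²), where χ_t = 2·tanh(x)/cos²(2t) and χ_x = tan(2t)/cosh²(x). Then the pair (ξ, θ) satisfies the determining system for reduction operators of the potential fast diffusion equation on Ω. (This verifies Case 4 with χ = tan(2t)tanh(x) of the classification theorem of non-Lie reduction operators.) -/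

import Mathlib

/-- Partial derivative with respect to the first variable `t`. -/
noncomputable def pt3 (f : ℝ × ℝ × ℝ → ℝ) (p : ℝ × ℝ × ℝ) : ℝ :=
  deriv (fun t => f (t, p.2.1, p.2.2)) p.1

/-- Partial derivative with respect to the second variable `x`. -/
noncomputable def px3 (f : ℝ × ℝ × ℝ → ℝ) (p : ℝ × ℝ × ℝ) : ℝ :=
  deriv (fun x => f (p.1, x, p.2.2)) p.2.1

/-- Partial derivative with respect to the third variable `v`. -/
noncomputable def pv3 (f : ℝ × ℝ × ℝ → ℝ) (p : ℝ × ℝ × ℝ) : ℝ :=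
  deriv (fun v => f (p.1, p.2.1, v)) p.2.2

/-- The determining system for reduction operators `Q = ∂_t + ξ∂_x + θ∂_v`
of the potential fast diffusion equation `v_t = v_xx / v_x`:
(i) `ξ_vv = ξ ξ_v`; (ii) `ξ_t = 2ξ_xv − θ_vv − θ_v ξ + θ ξ_v − ξ ξ_x`;
(iii) `θ_xx = θ θ_x`; (iv) `θ_t = 2θ_xv − ξ_xx − ξ_x θ + ξ θ_x − θ θ_v`. -/
def DeterminingSystem (ξ θ : ℝ × ℝ × ℝ → ℝ) (Ω : Set (ℝ × ℝ × ℝ)) : Prop :=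
  ∀ p ∈ Ω,
    pv3 (pv3 ξ) p = ξ p * pv3 ξ p ∧
    pt3 ξ p =
      2 * pv3 (px3 ξ) p - pv3 (pv3 θ) p - pv3 θ p * ξ p + θ p * pv3 ξ p - ξ p * px3 ξ p ∧
    px3 (px3 θ) p = θ p * px3 θ p ∧
    pt3 θ p =
      2 * pv3 (px3 θ) p - px3 (px3 ξ) p - px3 ξ p * θ p + ξ p * px3 θ p - θ p * pv3 θ p

/-!
In the coordinates `a = tan 2t`, `b = tanh x`, `T = tan v`, which obey the Riccati equations
`a_t = 2(1 + a²)`, `b_x = 1 - b²`, `T_v = 1 + T²`, one has `ξ = -2(1 + abT)/(T - ab)`, and on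
`Ω` the coefficient `θ` simplifies to `2(a - bT)/(T - ab)`. Each partial derivative of a
rational function of `(a, b, T)` is again one, and every function that occurs is, in each single
coordinate, either a Möbius function or a quadratic over the square of an affine function, so all
derivatives in the system are explicit; the four equations become rational identities in `a, b, T`.
Since `Ω` is open, `θ` may be replaced by its simplified form there.
-/

open Real Set Filter

theorem hasDerivAt_tanh (x : ℝ) : HasDerivAt tanh (1 - tanh x ^ 2) x := by
  have h := (hasDerivAt_sinh x).div (hasDerivAt_cosh x) (cosh_pos x).ne'
  rw [show sinh / cosh = tanh from funext fun y => (tanh_eq_sinh_div_cosh y).symm] at h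
  refine h.congr_deriv ?_
  rw [tanh_eq_sinh_div_cosh]
  field_simp [(cosh_pos x).ne']

theorem hasDerivAt_tan_one_add_sq {x : ℝ} (h : cos x ≠ 0) :
    HasDerivAt tan (1 + tan x ^ 2) x := by
  simpa [← inv_one_add_tan_sq h] using hasDerivAt_tan h

theorem hasDerivAt_tan_two_mul {t : ℝ} (h : cos (2 * t) ≠ 0) :
    HasDerivAt (fun u => tan (2 * u)) ((1 + tan (2 * t) ^ 2) * 2) t :=
  (hasDerivAt_tan_one_add_sq h).comp t ((hasDerivAt_id t).const_mul 2 |>.congr_deriv (mul_one 2))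

theorem hasDerivAt_affine_div_affine {g : ℝ → ℝ} (p q c d : ℝ) {z D : ℝ}
    (hg : ∀ w, g w = (p + q * w) / (c + d * w)) (hD : c + d * z = D) (h : D ≠ 0) :
    HasDerivAt g ((q * c - p * d) / D ^ 2) z := by
  subst hD
  rw [funext hg]
  refine ((((hasDerivAt_id' z).const_mul q).const_add p).div
    (((hasDerivAt_id' z).const_mul d).const_add c) h).congr_deriv ?_
  ring

theorem hasDerivAt_quadratic_div_affine_sq {g : ℝ → ℝ} (p r c d : ℝ) {z D : ℝ}
    (hg : ∀ w, g w = (p + r * w ^ 2) / (c + d * w) ^ 2) (hD : c + d * z = D) (h : D ≠ 0) :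
    HasDerivAt g (2 * (r * c * z - p * d) / D ^ 3) z := by
  subst hD
  rw [funext hg]
  refine (((((hasDerivAt_id' z).fun_pow 2).const_mul r).const_add p).div
    ((((hasDerivAt_id' z).const_mul d).const_add c).fun_pow 2) (pow_ne_zero 2 h)).congr_deriv ?_
  field_simp
  ring

theorem inv_one_sub_tanh_sq (x : ℝ) : (1 - tanh x ^ 2)⁻¹ = cosh x ^ 2 := by
  rw [tanh_eq_sinh_div_cosh]
  field_simp [(cosh_pos x).ne']
  exact (cosh_sq_sub_sinh_sq x).symm

section PartialDerivatives

variable {Ω : Set (ℝ × ℝ × ℝ)} {f g : ℝ × ℝ × ℝ → ℝ}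

theorem deriv_comp_congr_of_eqOn {γ : ℝ → ℝ × ℝ × ℝ} {s : ℝ} (hfg : EqOn f g Ω)
    (hΩ : IsOpen Ω) (hγ : ContinuousAt γ s) (hs : γ s ∈ Ω) :
    deriv (fun r => f (γ r)) s = deriv (fun r => g (γ r)) s :=
  EventuallyEq.deriv_eq ((hγ.eventually (hΩ.eventually_mem hs)).mono fun _ hr => hfg hr)

theorem Set.EqOn.pt3 (hfg : EqOn f g Ω) (hΩ : IsOpen Ω) : EqOn (pt3 f) (pt3 g) Ω :=
  fun _ hp => deriv_comp_congr_of_eqOn hfg hΩ (by fun_prop) hp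

theorem Set.EqOn.px3 (hfg : EqOn f g Ω) (hΩ : IsOpen Ω) : EqOn (px3 f) (px3 g) Ω :=
  fun _ hp => deriv_comp_congr_of_eqOn hfg hΩ (by fun_prop) hp

theorem Set.EqOn.pv3 (hfg : EqOn f g Ω) (hΩ : IsOpen Ω) : EqOn (pv3 f) (pv3 g) Ω :=
  fun _ hp => deriv_comp_congr_of_eqOn hfg hΩ (by fun_prop) hp

theorem DeterminingSystem.congr {ξ θ ξ' θ' : ℝ × ℝ × ℝ → ℝ} (hΩ : IsOpen Ω)
    (hξ : EqOn ξ ξ' Ω) (hθ : EqOn θ θ' Ω) (h : DeterminingSystem ξ' θ' Ω) :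
    DeterminingSystem ξ θ Ω := by
  intro p hp
  rw [(hξ.pv3 hΩ).pv3 hΩ hp, (hξ.px3 hΩ).pv3 hΩ hp, (hξ.px3 hΩ).px3 hΩ hp,
    (hθ.pv3 hΩ).pv3 hΩ hp, (hθ.px3 hΩ).pv3 hΩ hp, (hθ.px3 hΩ).px3 hΩ hp,
    hξ.pt3 hΩ hp, hξ.px3 hΩ hp, hξ.pv3 hΩ hp, hθ.pt3 hΩ hp, hθ.px3 hΩ hp, hθ.pv3 hΩ hp,
    hξ hp, hθ hp]
  exact h p hp

end PartialDerivatives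

def regularSet : Set (ℝ × ℝ × ℝ) :=
  {p | cos (2 * p.1) ≠ 0 ∧ cos p.2.2 ≠ 0 ∧ tan p.2.2 ≠ tan (2 * p.1) * tanh p.2.1}

theorem isOpen_regularSet : IsOpen regularSet := by
  refine isOpen_iff_mem_nhds.2 fun p ⟨ht, hv, hD⟩ => ?_
  have hcos_t : ContinuousAt (fun q : ℝ × ℝ × ℝ => cos (2 * q.1)) p := by fun_prop
  have hcos_v : ContinuousAt (fun q : ℝ × ℝ × ℝ => cos q.2.2) p := by fun_prop
  have htan_t : ContinuousAt (fun q : ℝ × ℝ × ℝ => tan (2 * q.1)) p :=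
    (continuousAt_tan.2 ht).comp (f := fun q : ℝ × ℝ × ℝ => 2 * q.1) (by fun_prop)
  have htan_v : ContinuousAt (fun q : ℝ × ℝ × ℝ => tan q.2.2) p :=
    (continuousAt_tan.2 hv).comp (f := fun q : ℝ × ℝ × ℝ => q.2.2) (by fun_prop)
  have htanh : ContinuousAt (fun q : ℝ × ℝ × ℝ => tanh q.2.1) p :=
    (hasDerivAt_tanh _).continuousAt.comp (f := fun q : ℝ × ℝ × ℝ => q.2.1) (by fun_prop)
  filter_upwards [hcos_t.eventually_ne ht, hcos_v.eventually_ne hv,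
    (htan_v.sub (htan_t.mul htanh)).eventually_ne (sub_ne_zero.2 hD)] with q h1 h2 h3
    using ⟨h1, h2, sub_ne_zero.1 h3⟩

noncomputable def ofCoords (F : ℝ → ℝ → ℝ → ℝ) (p : ℝ × ℝ × ℝ) : ℝ :=
  F (tan (2 * p.1)) (tanh p.2.1) (tan p.2.2)

section Coordinates

variable {F F' G : ℝ → ℝ → ℝ → ℝ}

theorem ofCoords_congr (h : ∀ a b T, T - a * b ≠ 0 → F a b T = G a b T) :
    EqOn (ofCoords F) (ofCoords G) regularSet :=
  fun _ hp => h _ _ _ (sub_ne_zero.2 hp.2.2)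

theorem pt3_ofCoords
    (hF : ∀ a b T, T - a * b ≠ 0 → HasDerivAt (fun a => F a b T) (F' a b T) a) :
    EqOn (pt3 (ofCoords F)) (ofCoords fun a b T => F' a b T * ((1 + a ^ 2) * 2)) regularSet :=
  fun _ hp => ((hF _ _ _ (sub_ne_zero.2 hp.2.2)).comp (h := fun u => tan (2 * u)) _
    (hasDerivAt_tan_two_mul hp.1)).deriv

theorem px3_ofCoords
    (hF : ∀ a b T, T - a * b ≠ 0 → HasDerivAt (fun b => F a b T) (F' a b T) b) :
    EqOn (px3 (ofCoords F)) (ofCoords fun a b T => F' a b T * (1 - b ^ 2)) regularSet :=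
  fun _ hp => ((hF _ _ _ (sub_ne_zero.2 hp.2.2)).comp _ (hasDerivAt_tanh _)).deriv

theorem pv3_ofCoords (hF : ∀ a b T, T - a * b ≠ 0 → HasDerivAt (F a b) (F' a b T) T) :
    EqOn (pv3 (ofCoords F)) (ofCoords fun a b T => F' a b T * (1 + T ^ 2)) regularSet :=
  fun _ hp => ((hF _ _ _ (sub_ne_zero.2 hp.2.2)).comp _
    (hasDerivAt_tan_one_add_sq hp.2.1)).deriv

end Coordinates

noncomputable def xi : ℝ × ℝ × ℝ → ℝ :=
  ofCoords fun a b T => -2 * (1 + a * b * T) / (T - a * b)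

noncomputable def theta : ℝ × ℝ × ℝ → ℝ :=
  ofCoords fun a b T => 2 * (a - b * T) / (T - a * b)

theorem eqOn_theta : EqOn (fun p => -(2 * tanh p.2.1 / cos (2 * p.1) ^ 2 +
      tan (2 * p.1) / cosh p.2.1 ^ 2 * xi p) / (1 + (tan (2 * p.1) * tanh p.2.1) ^ 2))
    theta regularSet := by
  rintro ⟨t, x, v⟩ ⟨ht, -, hne⟩
  have hD : tan v - tan (2 * t) * tanh x ≠ 0 := sub_ne_zero.2 hne
  simp only [xi, theta, ofCoords]
  rw [← inv_one_add_tan_sq ht, ← inv_one_sub_tanh_sq, div_inv_eq_mul, div_inv_eq_mul]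
  generalize tan (2 * t) = a, tanh x = b, tan v = T at hD ⊢
  have hD' : T - b * a ≠ 0 := by rwa [mul_comm]
  field_simp
  ring

theorem pv3_xi : EqOn (pv3 xi)
    (ofCoords fun a b T => 2 * (1 + (a * b) ^ 2) * (1 + T ^ 2) / (T - a * b) ^ 2) regularSet :=
  (pv3_ofCoords fun a b T hD => hasDerivAt_affine_div_affine (-2) (-2 * (a * b)) (-(a * b)) 1
    (fun _ => by ring) (by ring) hD).trans
    (ofCoords_congr fun a b T hD => by field_simp; ring)

theorem px3_xi : EqOn (px3 xi)
    (ofCoords fun a b T => -2 * a * (1 - b ^ 2) * (1 + T ^ 2) / (T - a * b) ^ 2) regularSet :=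
  (px3_ofCoords fun a b T hD => hasDerivAt_affine_div_affine (-2) (-2 * a * T) T (-a)
    (fun _ => by ring) (by ring) hD).trans
    (ofCoords_congr fun a b T hD => by field_simp; ring)

theorem pt3_xi : EqOn (pt3 xi)
    (ofCoords fun a b T => -4 * b * (1 + a ^ 2) * (1 + T ^ 2) / (T - a * b) ^ 2) regularSet :=
  (pt3_ofCoords fun a b T hD => hasDerivAt_affine_div_affine (-2) (-2 * b * T) T (-b)
    (fun _ => by ring) (by ring) hD).trans
    (ofCoords_congr fun a b T hD => by field_simp; ring)

theorem pv3_theta : EqOn (pv3 theta)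
    (ofCoords fun a b T => -2 * a * (1 - b ^ 2) * (1 + T ^ 2) / (T - a * b) ^ 2) regularSet :=
  (pv3_ofCoords fun a b T hD => hasDerivAt_affine_div_affine (2 * a) (-2 * b) (-(a * b)) 1
    (fun _ => by ring) (by ring) hD).trans
    (ofCoords_congr fun a b T hD => by field_simp; ring)

theorem px3_theta : EqOn (px3 theta)
    (ofCoords fun a b T => 2 * (1 - b ^ 2) * (a ^ 2 - T ^ 2) / (T - a * b) ^ 2) regularSet :=
  (px3_ofCoords fun a b T hD => hasDerivAt_affine_div_affine (2 * a) (-2 * T) T (-a)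
    (fun _ => by ring) (by ring) hD).trans
    (ofCoords_congr fun a b T hD => by field_simp; ring)

theorem pt3_theta : EqOn (pt3 theta)
    (ofCoords fun a b T => 4 * (1 + a ^ 2) * (1 - b ^ 2) * T / (T - a * b) ^ 2) regularSet :=
  (pt3_ofCoords fun a b T hD => hasDerivAt_affine_div_affine (-2 * b * T) 2 T (-b)
    (fun _ => by ring) (by ring) hD).trans
    (ofCoords_congr fun a b T hD => by field_simp; ring)

theorem pv3_pv3_xi : EqOn (pv3 (pv3 xi)) (ofCoords fun a b T =>
    -4 * (1 + (a * b) ^ 2) * (1 + a * b * T) * (1 + T ^ 2) / (T - a * b) ^ 3) regularSet :=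
  ((pv3_xi.pv3 isOpen_regularSet).trans (pv3_ofCoords fun a b T hD =>
    hasDerivAt_quadratic_div_affine_sq (2 * (1 + (a * b) ^ 2)) (2 * (1 + (a * b) ^ 2)) (-(a * b)) 1
      (fun _ => by ring) (by ring) hD)).trans
    (ofCoords_congr fun a b T hD => by field_simp; ring)

theorem pv3_pv3_theta : EqOn (pv3 (pv3 theta)) (ofCoords fun a b T =>
    4 * a * (1 - b ^ 2) * (1 + T ^ 2) * (1 + a * b * T) / (T - a * b) ^ 3) regularSet :=
  ((pv3_theta.pv3 isOpen_regularSet).trans (pv3_ofCoords fun a b T hD =>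
    hasDerivAt_quadratic_div_affine_sq (-2 * a * (1 - b ^ 2)) (-2 * a * (1 - b ^ 2)) (-(a * b)) 1
      (fun _ => by ring) (by ring) hD)).trans
    (ofCoords_congr fun a b T hD => by field_simp; ring)

theorem pv3_px3_xi : EqOn (pv3 (px3 xi)) (ofCoords fun a b T =>
    4 * a * (1 - b ^ 2) * (1 + T ^ 2) * (1 + a * b * T) / (T - a * b) ^ 3) regularSet :=
  ((px3_xi.trans pv3_theta.symm).pv3 isOpen_regularSet).trans pv3_pv3_theta

theorem px3_px3_xi : EqOn (px3 (px3 xi)) (ofCoords fun a b T =>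
    -4 * a * (1 - b ^ 2) * (1 + T ^ 2) * (a - b * T) / (T - a * b) ^ 3) regularSet :=
  ((px3_xi.px3 isOpen_regularSet).trans (px3_ofCoords fun a b T hD =>
    hasDerivAt_quadratic_div_affine_sq (-2 * a * (1 + T ^ 2)) (2 * a * (1 + T ^ 2)) T (-a)
      (fun _ => by ring) (by ring) hD)).trans
    (ofCoords_congr fun a b T hD => by field_simp; ring)

theorem pv3_px3_theta : EqOn (pv3 (px3 theta)) (ofCoords fun a b T =>
    -4 * a * (1 - b ^ 2) * (1 + T ^ 2) * (a - b * T) / (T - a * b) ^ 3) regularSet :=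
  ((px3_theta.pv3 isOpen_regularSet).trans (pv3_ofCoords fun a b T hD =>
    hasDerivAt_quadratic_div_affine_sq (2 * (1 - b ^ 2) * a ^ 2) (-2 * (1 - b ^ 2)) (-(a * b)) 1
      (fun _ => by ring) (by ring) hD)).trans
    (ofCoords_congr fun a b T hD => by field_simp; ring)

theorem px3_px3_theta : EqOn (px3 (px3 theta)) (ofCoords fun a b T =>
    4 * (1 - b ^ 2) * (a ^ 2 - T ^ 2) * (a - b * T) / (T - a * b) ^ 3) regularSet :=
  ((px3_theta.px3 isOpen_regularSet).trans (px3_ofCoords fun a b T hD =>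
    hasDerivAt_quadratic_div_affine_sq (2 * (a ^ 2 - T ^ 2)) (-2 * (a ^ 2 - T ^ 2)) T (-a)
      (fun _ => by ring) (by ring) hD)).trans
    (ofCoords_congr fun a b T hD => by field_simp; ring)

theorem determiningSystem_xi_theta : DeterminingSystem xi theta regularSet := by
  intro p hp
  rw [pv3_pv3_xi hp, pv3_px3_xi hp, px3_px3_xi hp, pv3_pv3_theta hp, pv3_px3_theta hp,
    px3_px3_theta hp, pt3_xi hp, px3_xi hp, pv3_xi hp, pt3_theta hp, px3_theta hp, pv3_theta hp]
  have hD : tan p.2.2 - tan (2 * p.1) * tanh p.2.1 ≠ 0 := sub_ne_zero.2 hp.2.2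
  simp only [xi, theta, ofCoords]
  generalize tan (2 * p.1) = a, tanh p.2.1 = b, tan p.2.2 = T at hD ⊢
  have hD' : T - b * a ≠ 0 := by rwa [mul_comm]
  refine ⟨?_, ?_, ?_, ?_⟩ <;> field_simp <;> ring

theorem reduction_operator_case4_tan_tanh
    (χ χt χx : ℝ → ℝ → ℝ)
    (hχ : χ = fun t x => Real.tan (2 * t) * Real.tanh x)
    (hχt : χt = fun t x => 2 * Real.tanh x / (Real.cos (2 * t)) ^ 2)
    (hχx : χx = fun t x => Real.tan (2 * t) / (Real.cosh x) ^ 2)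
    (ξ θ : ℝ × ℝ × ℝ → ℝ)
    (hξ : ξ = fun p =>
      -2 * (1 + χ p.1 p.2.1 * Real.tan p.2.2) / (Real.tan p.2.2 - χ p.1 p.2.1))
    (hθ : θ = fun p =>
      -(χt p.1 p.2.1 + χx p.1 p.2.1 * ξ p) / (1 + (χ p.1 p.2.1) ^ 2)) :
    DeterminingSystem ξ θ
      {p : ℝ × ℝ × ℝ | Real.cos (2 * p.1) ≠ 0 ∧ Real.cos p.2.2 ≠ 0 ∧
        Real.tan p.2.2 ≠ χ p.1 p.2.1} := by
  subst hχ hχt hχx hξ hθ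
  exact determiningSystem_xi_theta.congr isOpen_regularSet (fun _ _ => rfl) eqOn_theta
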